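/- Let A be an associative algebra over Q(q), let B ∈ A and let Z be a central element of A. Define B^{(2k+1)}_{0̄} = (1/[2k+1]_q!) · B · ∏_{j=1}^{k} (B² − [2j]_q² q Z) and B^{(2k)}_{0̄} = (1/[2k]_q!) · ∏_{j=1}^{k} (B² − [2j−2]_q² q Z). Then for every m ≥ 0: if m is odd, B · B^{(m)}_{0̄} = [m+1]_q B^{(m+1)}_{0̄}, and if m is even, B · B^{(m)}_{0̄} = [m+1]_q B^{(m+1)}_{0̄} + [m]_q q Z B^{(m−1)}_{0̄}. -/
import Mathlib


noncomputable section

abbrev K : Type := RatFunc ℚ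

/-- The indeterminate `q` in `ℚ(q)`. -/
def qq : K := RatFunc.X

/-- Balanced quantum integer at base `x`. -/
def qintx (x : K) (m : ℤ) : K := (x ^ m - x ^ (-m)) / (x - x⁻¹)

/-- Balanced quantum integer `[m]_q`. -/
def qint (m : ℤ) : K := qintx qq m

/-- Quantum factorial at base `x`. -/
def qfactx (x : K) (m : ℕ) : K := ∏ j ∈ Finset.range m, qintx x ((j : ℤ) + 1)

/-- Quantum factorial `[m]_q!`. -/
def qfact (m : ℕ) : K := qfactx qq m

/-- Gaussian binomial coefficient at base `x` (zero when `r > m`). -/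
def qbinomx (x : K) (m r : ℕ) : K :=
  if r ≤ m then qfactx x m / (qfactx x r * qfactx x (m - r)) else 0

/-- Gaussian binomial coefficient. -/
def qbinom (m r : ℕ) : K := qbinomx qq m r

/-- The ı-divided powers `B^{(m)}_{p̄}` of `B` with central parameter `Z`,
given by the closed product formulas of the paper. -/
def iDP {A : Type*} [Ring A] [Algebra K A] (B Z : A) (p : ZMod 2) (m : ℕ) : A :=
  (qfact m)⁻¹ •
    ((if m % 2 = 1 then B else 1) *
      ((List.range (m / 2)).map (fun j =>
        B ^ 2 -
          ((qint (if p = 1 then 2 * (j : ℤ) + 1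
                  else if m % 2 = 1 then 2 * (j : ℤ) + 2 else 2 * (j : ℤ))) ^ 2 * qq) • Z)).prod)

/-- The usual divided power `x^{(k)} = x^k/[k]_q!`. -/
def dp {A : Type*} [Ring A] [Algebra K A] (x : A) (k : ℕ) : A := (qfact k)⁻¹ • x ^ k

/-! ### Auxiliary lemmas -/

lemma qq_ne_zero : qq ≠ 0 := RatFunc.X_ne_zero

lemma qq_pow_ne_one (n : ℕ) (h : n ≠ 0) : qq ^ n ≠ 1 := by
  rw [qq, ← RatFunc.algebraMap_X (K := ℚ), ← map_pow,
    ← map_one (algebraMap (Polynomial ℚ) (RatFunc ℚ))]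
  intro hc
  have h2 := RatFunc.algebraMap_injective ℚ hc
  have := congrArg Polynomial.natDegree h2
  simp [Polynomial.natDegree_X_pow] at this
  omega

lemma qden_ne_zero : qq - qq⁻¹ ≠ 0 := by
  intro h
  rw [sub_eq_zero] at h
  have : qq ^ 2 = 1 := by
    rw [sq]; nth_rewrite 2 [h]; exact mul_inv_cancel₀ qq_ne_zero
  exact qq_pow_ne_one 2 (by norm_num) this

lemma qint_ne_zero (n : ℤ) (h : 0 < n) : qint n ≠ 0 := by
  rw [qint, qintx]
  apply div_ne_zero _ qden_ne_zero
  intro hc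
  rw [sub_eq_zero] at hc
  have h2 : qq ^ (2 * n) = 1 := by
    rw [two_mul, zpow_add₀ qq_ne_zero]
    nth_rewrite 2 [hc]
    rw [← zpow_add₀ qq_ne_zero]; simp
  have h3 : qq ^ ((2 * n).toNat) = 1 := by
    rw [← zpow_natCast, Int.toNat_of_nonneg (by omega)]; exact h2
  exact qq_pow_ne_one _ (by omega) h3

lemma qint_zero : qint 0 = 0 := by simp [qint, qintx]

lemma qint_one : qint 1 = 1 := by
  rw [qint, qintx]; simp only [zpow_one, zpow_neg_one]
  exact div_self qden_ne_zero

lemma qfact_succ (m : ℕ) : qfact (m + 1) = qfact m * qint ((m : ℤ) + 1) := by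
  rw [qfact, qfact, qfactx, qfactx, Finset.prod_range_succ]; rfl

lemma qfact_ne_zero (m : ℕ) : qfact m ≠ 0 := by
  rw [qfact, qfactx]
  apply Finset.prod_ne_zero_iff.mpr
  intro j _
  exact qint_ne_zero ((j : ℤ) + 1) (by omega)

/-- The product `∏_{j<k} (B² - [2j+2]² q Z)`. -/
def Lk {A : Type*} [Ring A] [Algebra K A] (B Z : A) (k : ℕ) : A :=
  ((List.range k).map (fun j => B ^ 2 - ((qint (2 * (j : ℤ) + 2)) ^ 2 * qq) • Z)).prod

/-- The product `∏_{j<k} (B² - [2j]² q Z)`. -/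
def Mk {A : Type*} [Ring A] [Algebra K A] (B Z : A) (k : ℕ) : A :=
  ((List.range k).map (fun j => B ^ 2 - ((qint (2 * (j : ℤ))) ^ 2 * qq) • Z)).prod

lemma iDP_odd {A : Type*} [Ring A] [Algebra K A] (B Z : A) (t : ℕ) :
    iDP B Z 0 (2 * t + 1) = (qfact (2 * t + 1))⁻¹ • (B * Lk B Z t) := by
  have h1 : (2 * t + 1) % 2 = 1 := by omega
  have h2 : (2 * t + 1) / 2 = t := by omega
  simp [iDP, Lk, h1, h2, (by decide : ¬ (0 : ZMod 2) = 1)]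

lemma iDP_even {A : Type*} [Ring A] [Algebra K A] (B Z : A) (t : ℕ) :
    iDP B Z 0 (2 * t) = (qfact (2 * t))⁻¹ • Mk B Z t := by
  have h1 : ¬ (2 * t) % 2 = 1 := by omega
  have h2 : (2 * t) / 2 = t := by omega
  simp [iDP, Mk, h1, h2, (by decide : ¬ (0 : ZMod 2) = 1)]

lemma Mk_succ {A : Type*} [Ring A] [Algebra K A] (B Z : A) (t : ℕ) :
    Mk B Z (t + 1) = B ^ 2 * Lk B Z t := by
  rw [Mk, Lk]
  simp only [bind_pure_comp, List.map_eq_map, List.map_map]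
  rw [List.range_succ_eq_map, List.map_cons, List.prod_cons, List.map_map]
  congr 1
  simp [qint_zero]

lemma Lk_succ {A : Type*} [Ring A] [Algebra K A] (B Z : A) (t : ℕ) :
    Lk B Z (t + 1) = Lk B Z t * (B ^ 2 - ((qint (2 * (t : ℤ) + 2)) ^ 2 * qq) • Z) := by
  rw [Lk, Lk]
  simp only [bind_pure_comp, List.map_eq_map, List.map_map]
  rw [List.range_succ, List.map_append, List.prod_append]
  simp

lemma commute_Lk {A : Type*} [Ring A] [Algebra K A] (B Z : A)
    (hZ : ∀ a : A, Z * a = a * Z) (t : ℕ) : Commute B (Lk B Z t) := by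
  induction t with
  | zero => simp [Lk]
  | succ n ih =>
    rw [Lk_succ]
    exact ih.mul_right (((Commute.refl B).pow_right 2).sub_right
      ((Commute.smul_right ((hZ B).symm : Commute B Z) _)))

theorem stmt1 {A : Type*} [Ring A] [Algebra K A] (B Z : A)
    (hZ : ∀ a : A, Z * a = a * Z) :
    ∀ m : ℕ,
      (Odd m → B * iDP B Z 0 m = qint (m + 1) • iDP B Z 0 (m + 1)) ∧
      (Even m → B * iDP B Z 0 m =
        qint (m + 1) • iDP B Z 0 (m + 1) + (qint m * qq) • (Z * iDP B Z 0 (m - 1))) := by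
  intro m
  constructor
  · rintro ⟨t, rfl⟩
    rw [show 2 * t + 1 + 1 = 2 * (t + 1) from by ring, iDP_odd, iDP_even, Mk_succ]
    rw [mul_smul_comm, smul_smul, ← mul_assoc, ← sq]
    congr 1
    have h1 : qint (((2 * t + 1 : ℕ) : ℤ) + 1) ≠ 0 := qint_ne_zero _ (by positivity)
    have h2 := qfact_ne_zero (2 * t + 1)
    rw [show 2 * (t + 1) = (2 * t + 1) + 1 from by ring, qfact_succ (2 * t + 1)]
    rw [mul_inv, ← mul_assoc, mul_comm (qint _) ((qfact (2 * t + 1))⁻¹), mul_assoc,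
      mul_inv_cancel₀ h1, mul_one]
  · rintro ⟨t, rfl⟩
    rw [show t + t = 2 * t from by ring]
    match t with
    | 0 =>
      simp only [Nat.mul_zero, Nat.zero_sub]
      rw [show (0 : ℕ) + 1 = 2 * 0 + 1 from rfl, iDP_odd]
      have h0 : iDP B Z 0 0 = 1 := by
        simp [iDP, qfact, qfactx]
      have hf0 : qfact 0 = 1 := by simp [qfact, qfactx]
      have hf1 : qfact (2 * 0 + 1) = 1 := by
        rw [show 2 * 0 + 1 = 0 + 1 from rfl, qfact_succ, hf0, one_mul,
          show ((0 : ℕ) : ℤ) + 1 = 1 from by norm_num, qint_one]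
      have hq0 : qint ((0 : ℕ) : ℤ) = 0 := by
        rw [show ((0 : ℕ) : ℤ) = 0 from by norm_num, qint_zero]
      have hq1 : qint (((0 : ℕ) : ℤ) + 1) = 1 := by
        rw [show ((0 : ℕ) : ℤ) + 1 = 1 from by norm_num, qint_one]
      rw [h0, mul_one, hq0, hq1, zero_mul, zero_smul, add_zero, one_smul, hf1]
      simp [Lk]
    | s + 1 =>
      have e1 : 2 * (s + 1) - 1 = 2 * s + 1 := by omega
      have e2 : 2 * (s + 1) + 1 = 2 * (s + 1) + 1 := rfl
      rw [e1, iDP_even, Mk_succ, show 2 * (s + 1) + 1 = 2 * (s + 1) + 1 from rfl,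
        iDP_odd B Z (s + 1), iDP_odd B Z s, Lk_succ]
      set c : K := (qint (2 * (s : ℤ) + 2)) ^ 2 * qq with hc
      -- scalar bookkeeping
      have hfs1 : qfact (2 * (s + 1) + 1) = qfact (2 * (s + 1)) * qint (2 * (s : ℤ) + 3) := by
        rw [show 2 * (s + 1) + 1 = (2 * (s + 1)) + 1 from rfl, qfact_succ]
        congr 1 <;> (push_cast; try ring)
      have hfs2 : qfact (2 * (s + 1)) = qfact (2 * s + 1) * qint (2 * (s : ℤ) + 2) := by
        rw [show 2 * (s + 1) = (2 * s + 1) + 1 from by ring, qfact_succ]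
        congr 1 <;> (push_cast; try ring)
      have hne1 : qint (2 * (s : ℤ) + 3) ≠ 0 := qint_ne_zero _ (by positivity)
      have hne2 : qint (2 * (s : ℤ) + 2) ≠ 0 := qint_ne_zero _ (by positivity)
      have hfne : qfact (2 * s + 1) ≠ 0 := qfact_ne_zero _
      have hfne2 : qfact (2 * (s + 1)) ≠ 0 := qfact_ne_zero _
      -- rewrite qint coercion args
      have ha1 : qint ((2 * (s + 1) : ℕ) + 1) = qint (2 * (s : ℤ) + 3) := by
        congr 1 <;> (push_cast; try ring)
      have ha2 : qint ((2 * (s + 1) : ℕ)) = qint (2 * (s : ℤ) + 2) := by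
        congr 1 <;> (push_cast; try ring)
      rw [ha1, ha2]
      rw [mul_smul_comm, smul_smul, mul_smul_comm, smul_smul]
      have hs1 : qint (2 * (s : ℤ) + 3) * (qfact (2 * (s + 1) + 1))⁻¹
          = (qfact (2 * (s + 1)))⁻¹ := by
        rw [hfs1]; field_simp; try ring
      have hs2 : qint (2 * (s : ℤ) + 2) * qq * (qfact (2 * s + 1))⁻¹
          = (qfact (2 * (s + 1)))⁻¹ * c := by
        rw [hfs2, hc]; field_simp; try ring
      rw [hs1, hs2, mul_smul ((qfact (2 * (s + 1)))⁻¹) c, ← smul_add]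
      congr 1
      -- algebra identity
      have hcom : Commute B (Lk B Z s) := commute_Lk B Z hZ s
      have h1 : Z * (B * Lk B Z s) = (B * Lk B Z s) * Z := hZ _
      rw [h1]
      rw [mul_sub, mul_smul_comm, mul_sub, mul_smul_comm, ← mul_assoc, ← mul_assoc,
        ← mul_assoc, sub_add_cancel]
      rw [mul_assoc B (B ^ 2) (Lk B Z s), mul_assoc B (Lk B Z s) (B ^ 2),
        (hcom.pow_left 2).eq]
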